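/- Let φ be strictly convex and differentiable on a convex set X ⊆ R^d with Bregman divergence D_φ. For any finite family of points x_1,...,x_m in X whose arithmetic mean x̄ lies in the interior of X, the function μ ↦ ∑_{i=1}^m D_φ(x_i; μ) is uniquely minimized over the interior of X at μ = x̄. -/

import Mathlib

/-!
For every `μ`, the three-point identity
`∑ i, D(xᵢ; μ) = ∑ i, D(xᵢ; x̄) + m · D(x̄; μ)` holds, because `∑ i, (xᵢ - x̄) = 0` kills the
gradient term at `x̄`. Strict convexity makes `D(x̄; μ) > 0` for `μ ≠ x̄`: the tangent inequality
at the midpoint of `μ` and `x̄`, combined with strict convexity there, makes it strict.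
-/

open Finset

theorem ConvexOn.add_fderiv_sub_le {E : Type*} [NormedAddCommGroup E] [NormedSpace ℝ E]
    {s : Set E} {f : E → ℝ} {f' : E →L[ℝ] ℝ} {x y : E} (hf : ConvexOn ℝ s f)
    (hx : x ∈ s) (hy : y ∈ s) (hf' : HasFDerivAt f f' x) :
    f x + f' (y - x) ≤ f y := by
  let L : ℝ →ᵃ[ℝ] E := AffineMap.lineMap x y
  have hderiv : HasDerivAt (f ∘ L) (f' (y - x)) 0 :=
    HasFDerivAt.comp_hasDerivAt 0 (by simpa [L] using hf') AffineMap.hasDerivAt_lineMap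
  have hslope := (hf.comp_affineMap L).le_slope_of_hasDerivAt (x := 0) (y := 1)
    (by simpa [L] using hx) (by simpa [L] using hy) zero_lt_one hderiv
  simp only [slope_def_field, Function.comp_apply, L, AffineMap.lineMap_apply_zero,
    AffineMap.lineMap_apply_one, sub_zero, div_one] at hslope
  linarith

theorem StrictConvexOn.add_fderiv_sub_lt {E : Type*} [NormedAddCommGroup E] [NormedSpace ℝ E]
    {s : Set E} {f : E → ℝ} {f' : E →L[ℝ] ℝ} {x y : E} (hf : StrictConvexOn ℝ s f)
    (hx : x ∈ s) (hy : y ∈ s) (hxy : x ≠ y) (hf' : HasFDerivAt f f' x) :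
    f x + f' (y - x) < f y := by
  set z : E := (1 / 2 : ℝ) • x + (1 / 2 : ℝ) • y
  have hz : z ∈ s := hf.1 hx hy (by norm_num) (by norm_num) (by norm_num)
  have htangent := hf.convexOn.add_fderiv_sub_le hx hz hf'
  have hmid : f z < (1 / 2 : ℝ) • f x + (1 / 2 : ℝ) • f y :=
    hf.2 hx hy hxy (by norm_num) (by norm_num) (by norm_num)
  have hzx : z - x = (1 / 2 : ℝ) • (y - x) := by module
  rw [hzx, map_smul, smul_eq_mul] at htangent
  simp only [smul_eq_mul] at hmid
  linarith

section Bregman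

variable {E : Type*} [NormedAddCommGroup E] [InnerProductSpace ℝ E]

def bregmanDiv (φ : E → ℝ) (gradφ : E → E) (x μ : E) : ℝ :=
  φ x - φ μ - inner ℝ (x - μ) (gradφ μ)

theorem bregmanDiv_pos [CompleteSpace E] {X : Set E} {φ : E → ℝ} {gradφ : E → E} {x μ : E}
    (hφ : StrictConvexOn ℝ X φ) (hx : x ∈ X) (hμ : μ ∈ X) (hne : x ≠ μ)
    (hgrad : HasGradientAt φ (gradφ μ) μ) : 0 < bregmanDiv φ gradφ x μ := by
  have := hφ.add_fderiv_sub_lt hμ hx hne.symm hgrad.hasFDerivAt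
  rw [InnerProductSpace.toDual_apply_apply, real_inner_comm] at this
  unfold bregmanDiv
  linarith

theorem sum_bregmanDiv_eq_add_card_mul {ι : Type*} [Fintype ι] (φ : E → ℝ) (gradφ : E → E)
    (x : ι → E) {xbar : E} (hxbar : ∑ i, x i = (Fintype.card ι : ℝ) • xbar) (μ : E) :
    ∑ i, bregmanDiv φ gradφ (x i) μ =
      ∑ i, bregmanDiv φ gradφ (x i) xbar + Fintype.card ι * bregmanDiv φ gradφ xbar μ := by
  have hinner : ∀ ν, ∑ i, inner ℝ (x i - ν) (gradφ ν) =
      (Fintype.card ι : ℝ) * inner ℝ (xbar - ν) (gradφ ν) := fun ν => by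
    rw [← sum_inner, sum_sub_distrib, hxbar, sum_const, card_univ, ← Nat.cast_smul_eq_nsmul ℝ,
      ← smul_sub, real_inner_smul_left]
  simp only [bregmanDiv, sum_sub_distrib, hinner, sum_const, card_univ, nsmul_eq_mul, sub_self,
    inner_zero_left]
  ring

end Bregman

theorem bregman_mean_minimizer_general (d m : ℕ) (hm : 0 < m)
    (X : Set (EuclideanSpace ℝ (Fin d)))
    (φ : EuclideanSpace ℝ (Fin d) → ℝ) (hφ : StrictConvexOn ℝ X φ)
    (gradφ : EuclideanSpace ℝ (Fin d) → EuclideanSpace ℝ (Fin d))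
    (hgrad : ∀ μ ∈ interior X, HasGradientAt φ (gradφ μ) μ)
    (D : EuclideanSpace ℝ (Fin d) → EuclideanSpace ℝ (Fin d) → ℝ)
    (hD : ∀ x μ, D x μ = φ x - φ μ - inner ℝ (x - μ) (gradφ μ))
    (x : Fin m → EuclideanSpace ℝ (Fin d))
    (xbar : EuclideanSpace ℝ (Fin d))
    (hxbar : xbar = (m : ℝ)⁻¹ • ∑ i, x i)
    (hmean : xbar ∈ interior X) :
    ∀ μ ∈ interior X, μ ≠ xbar →
      ∑ i, D (x i) xbar < ∑ i, D (x i) μ := by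
  intro μ hμ hne
  obtain rfl : D = bregmanDiv φ gradφ := funext₂ hD
  have hsum : ∑ i, x i = (Fintype.card (Fin m) : ℝ) • xbar := by
    rw [hxbar, Fintype.card_fin, smul_inv_smul₀ (Nat.cast_ne_zero.mpr hm.ne')]
  rw [sum_bregmanDiv_eq_add_card_mul φ gradφ x hsum μ, lt_add_iff_pos_right]
  exact mul_pos (by simpa using hm)
    (bregmanDiv_pos hφ (interior_subset hmean) (interior_subset hμ) hne.symm (hgrad μ hμ))

/-- The arithmetic mean uniquely minimizes the total Bregman divergence
`μ ↦ ∑ i, D_φ(x i; μ)` over the interior of `X`. -/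
theorem bregman_mean_minimizer (d m : ℕ) (hm : 0 < m)
    (X : Set (EuclideanSpace ℝ (Fin d))) (hX : Convex ℝ X)
    (φ : EuclideanSpace ℝ (Fin d) → ℝ) (hφ : StrictConvexOn ℝ X φ)
    (gradφ : EuclideanSpace ℝ (Fin d) → EuclideanSpace ℝ (Fin d))
    (hgrad : ∀ μ ∈ interior X, HasGradientAt φ (gradφ μ) μ)
    (D : EuclideanSpace ℝ (Fin d) → EuclideanSpace ℝ (Fin d) → ℝ)
    (hD : ∀ x μ, D x μ = φ x - φ μ - inner ℝ (x - μ) (gradφ μ))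
    (x : Fin m → EuclideanSpace ℝ (Fin d)) (hx : ∀ i, x i ∈ X)
    (xbar : EuclideanSpace ℝ (Fin d))
    (hxbar : xbar = (m : ℝ)⁻¹ • ∑ i, x i)
    (hmean : xbar ∈ interior X) :
    ∀ μ ∈ interior X, μ ≠ xbar →
      ∑ i, D (x i) xbar < ∑ i, D (x i) μ :=
  bregman_mean_minimizer_general d m hm X φ hφ gradφ hgrad D hD x xbar hxbar hmean
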